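/- Suppose E is finite dimensional and A(X,E) contains the constant functions. Let T, S : A(X,E) → C(Y,F) be jointly separating linear maps. Then the maps Λ^T, Λ^S : Y_c → L(E,F) defined by Λ^T_y(e) = T(ẽ)(y) and Λ^S_y(e) = S(ẽ)(y) (ẽ the constant function with value e) are continuous from Y_c into the space L(E,F) of bounded linear operators from E to F with the operator norm. -/

import Mathlib

open Set Filter Topology

/-- `B` together with the norm `nB` is a regular Banach function algebra on the
compact Hausdorff space `X`: it separates points (it contains the constants since it
is a subalgebra), `nB` is a complete algebra norm on `B` dominating the sup norm, and
the regularity (partition of unity) property holds. -/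
structure IsRegularBanachFunctionAlgebra {X : Type*} [TopologicalSpace X] [CompactSpace X]
    [T2Space X] (B : Subalgebra ℂ C(X, ℂ)) (nB : C(X, ℂ) → ℝ) : Prop where
  separates : ∀ x y : X, x ≠ y → ∃ f ∈ B, f x ≠ f y
  norm_nonneg : ∀ f ∈ B, 0 ≤ nB f
  norm_add_le : ∀ f ∈ B, ∀ g ∈ B, nB (f + g) ≤ nB f + nB g
  norm_smul : ∀ (c : ℂ), ∀ f ∈ B, nB (c • f) = ‖c‖ * nB f
  norm_eq_zero_iff : ∀ f ∈ B, (nB f = 0 ↔ f = 0)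
  norm_mul_le : ∀ f ∈ B, ∀ g ∈ B, nB (f * g) ≤ nB f * nB g
  sup_norm_le : ∀ f ∈ B, ‖f‖ ≤ nB f
  complete : ∀ u : ℕ → C(X, ℂ), (∀ n, u n ∈ B) →
    (∀ ε : ℝ, 0 < ε → ∃ N : ℕ, ∀ m ≥ N, ∀ n ≥ N, nB (u m - u n) < ε) →
    ∃ l ∈ B, ∀ ε : ℝ, 0 < ε → ∃ N : ℕ, ∀ n ≥ N, nB (u n - l) < ε
  regular : ∀ K : Set X, IsCompact K → ∀ (n : ℕ) (U : Fin n → Set X),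
    (∀ i, IsOpen (U i)) → K ⊆ ⋃ i, U i →
    ∃ g : Fin n → C(X, ℂ), (∀ i, g i ∈ B) ∧ (∀ i, closure {x | g i x ≠ 0} ⊆ U i) ∧
      ∀ x ∈ K, (∑ i, g i x) = 1

variable {X Y E F : Type*} [TopologicalSpace X] [CompactSpace X] [T2Space X]
  [TopologicalSpace Y] [CompactSpace Y] [T2Space Y]
  [NormedAddCommGroup E] [NormedSpace ℂ E] [CompleteSpace E]
  [NormedAddCommGroup F] [NormedSpace ℂ F] [CompleteSpace F]
  (A : Submodule ℂ C(X, E))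

/-- The cozero set of a function in the subspace `A = A(X,E)` of `C(X,E)`. -/
def coz (f : ↥A) : Set X := {x | (f : C(X, E)) x ≠ 0}

/-- `T, S : A(X,E) → C(Y,F)` are jointly separating: `coz(Tf) ∩ coz(Sg) = ∅` whenever
`coz(f) ∩ coz(g) = ∅`. -/
def JointlySeparatingV (T S : ↥A →ₗ[ℂ] C(Y, F)) : Prop :=
  ∀ f g : ↥A, coz A f ∩ coz A g = ∅ → {y | T f y ≠ 0} ∩ {y | S g y ≠ 0} = ∅

/-- The set `Y₁ = (⋃_f coz(Tf)) ∩ (⋃_f coz(Sf))`. -/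
def Y1V (T S : ↥A →ₗ[ℂ] C(Y, F)) : Set Y :=
  {y | (∃ f : ↥A, T f y ≠ 0) ∧ (∃ f : ↥A, S f y ≠ 0)}

/-- For `v* ∈ F*`, the set `Y₁^{v*} = (⋃_f coz(v*∘Tf)) ∩ (⋃_f coz(v*∘Sf))`. -/
def Y1v (T S : ↥A →ₗ[ℂ] C(Y, F)) (v : F →L[ℂ] ℂ) : Set Y :=
  {y | (∃ f : ↥A, v (T f y) ≠ 0) ∧ (∃ f : ↥A, v (S f y) ≠ 0)}

/-- `x` is a support point of `y` for the pair of (scalar-valued) maps `T', S'`. -/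
def IsSupportPointFor (T' S' : ↥A → Y → ℂ) (y : Y) (x : X) : Prop :=
  ∀ V ∈ 𝓝 x, ∃ f : ↥A, coz A f ⊆ V ∧ (T' f y ≠ 0 ∨ S' f y ≠ 0)

/-- The set `Y_c` of points `y ∈ Y₁` such that `f ↦ Tf(y)` and `f ↦ Sf(y)` are
sup-norm continuous from `A(X,E)` into `F` with its weak topology. -/
def YcV (T S : ↥A →ₗ[ℂ] C(Y, F)) : Set Y :=
  {y ∈ Y1V A T S | Continuous (fun f : ↥A => toWeakSpace ℂ F (T f y)) ∧
    Continuous (fun f : ↥A => toWeakSpace ℂ F (S f y))}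

theorem continuousOn_clm_of_apply_eq_continuousMap {𝕜 Z V W : Type*}
    [NontriviallyNormedField 𝕜] [CompleteSpace 𝕜]
    [NormedAddCommGroup V] [NormedSpace 𝕜 V] [FiniteDimensional 𝕜 V]
    [NormedAddCommGroup W] [NormedSpace 𝕜 W] [TopologicalSpace Z]
    {Λ : Z → V →L[𝕜] W} {s : Set Z} (G : V → C(Z, W)) (h : ∀ z ∈ s, ∀ v, Λ z v = G v z) :
    ContinuousOn Λ s :=
  continuousOn_clm_apply.2 fun v => (G v).continuous.continuousOn.congr fun z hz => h z hz v

theorem representing_operators_continuous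
    [FiniteDimensional ℂ E]
    (hconst : ∀ e : E, ContinuousMap.const X e ∈ A)
    (T S : ↥A →ₗ[ℂ] C(Y, F)) :
    (∀ ΛT : Y → (E →L[ℂ] F),
      (∀ y ∈ YcV A T S, ∀ e : E, ΛT y e = T ⟨ContinuousMap.const X e, hconst e⟩ y) →
      ContinuousOn ΛT (YcV A T S)) ∧
    (∀ ΛS : Y → (E →L[ℂ] F),
      (∀ y ∈ YcV A T S, ∀ e : E, ΛS y e = S ⟨ContinuousMap.const X e, hconst e⟩ y) →
      ContinuousOn ΛS (YcV A T S)) :=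
  ⟨fun _ hΛ => continuousOn_clm_of_apply_eq_continuousMap _ hΛ,
    fun _ hΛ => continuousOn_clm_of_apply_eq_continuousMap _ hΛ⟩
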